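/- Let β > 1, L > 0, n ≥ 4, and define F_{β,L}(x) = (x·f_{β,L}(x))^{1/(2β+1)} where f_{β,L}(x) = βx^{2β} for x ≤ L and f_{β,L}(x) = nβ²L^{2β−1}x for x > L. Then nβ·φ_{β,L}(x) ≥ F_{β,L}(x)^β for all x ≥ 0. -/

import Mathlib

/-- Linearized power function. -/
noncomputable def phi (β L x : ℝ) : ℝ :=
  if x ≤ L then x ^ β else β * L ^ (β-1) * (x - L) + L ^ β

/-- The comparison function, linear for large `x`. -/
noncomputable def ffun (n : ℕ) (β L x : ℝ) : ℝ :=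
  if x ≤ L then β * x ^ (2*β) else (n:ℝ) * β^2 * L ^ (2*β-1) * x

/-- `F_{β,L}(x) = (x f_{β,L}(x))^{1/(2β+1)}`. -/
noncomputable def Ffun (n : ℕ) (β L x : ℝ) : ℝ := (x * ffun n β L x) ^ (1/(2*β+1))

/-!
Both regimes rest on `a ^ e ≤ a` for `a ≥ 1`, `e ≤ 1`. For `x ≤ L`, `F = β^{1/(2β+1)} x`, so
`F^β = β^{β/(2β+1)} x^β ≤ β x^β`. For `x > L`, put `y = x / L ≥ 1`; then
`F^β = L^β (nβ²y²)^{β/(2β+1)} ≤ L^β (nβy)^{2β/(2β+1)} ≤ nβ L^β y = nβ L^{β-1} x ≤ nβ φ(x)`.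
-/

open Real

lemma phi_of_le {β L x : ℝ} (hxL : x ≤ L) : phi β L x = x ^ β := if_pos hxL

lemma rpow_sub_one_mul_le_phi {β L x : ℝ} (hβ : 1 ≤ β) (hL : 0 < L) (hxL : L < x) :
    L ^ (β - 1) * x ≤ phi β L x := by
  have hLβ : L ^ β = L ^ (β - 1) * L := by rw [rpow_sub_one hL.ne', div_mul_cancel₀ _ hL.ne']
  have : 0 ≤ L ^ (β - 1) * ((β - 1) * (x - L)) :=
    mul_nonneg (rpow_nonneg hL.le _) (mul_nonneg (by linarith) (by linarith))
  rw [phi, if_neg hxL.not_ge, hLβ]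
  linarith

lemma Ffun_of_le {n : ℕ} {β L x : ℝ} (hβ : 0 < β) (hx : 0 ≤ x) (hxL : x ≤ L) :
    Ffun n β L x = β ^ (1 / (2 * β + 1)) * x := by
  have hc : 2 * β + 1 ≠ 0 := by positivity
  have hxf : x * ffun n β L x = β * x ^ (2 * β + 1) := by
    rw [ffun, if_pos hxL, rpow_add_one' hx hc]; ring
  rw [Ffun, hxf, mul_rpow hβ.le (rpow_nonneg hx _), one_div, rpow_rpow_inv hx hc]

lemma Ffun_of_lt {n : ℕ} {β L x : ℝ} (hβ : 0 < β) (hL : 0 < L) (hxL : L < x) :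
    Ffun n β L x = L * (n * β ^ 2 * (x / L) ^ 2) ^ (1 / (2 * β + 1)) := by
  have hc : 2 * β + 1 ≠ 0 := by positivity
  have hL2 : L ^ (2 * β + 1) = L ^ (2 * β - 1) * L ^ 2 := by
    rw [show 2 * β + 1 = (2 * β - 1) + (2 : ℕ) by push_cast; ring, rpow_add_natCast hL.ne']
  have hxf : x * ffun n β L x = L ^ (2 * β + 1) * (n * β ^ 2 * (x / L) ^ 2) := by
    rw [ffun, if_neg hxL.not_ge, hL2]; field_simp
  rw [Ffun, hxf, mul_rpow (rpow_nonneg hL.le _) (by positivity), one_div, rpow_rpow_inv hL.le hc]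

lemma Ffun_rpow_le_of_le {n : ℕ} {β L x : ℝ} (hn : 1 ≤ (n : ℝ)) (hβ : 1 ≤ β) (hx : 0 ≤ x)
    (hxL : x ≤ L) : Ffun n β L x ^ β ≤ n * β * x ^ β := by
  have hβ0 : 0 < β := by linarith
  rw [Ffun_of_le hβ0 hx hxL, mul_rpow (rpow_nonneg hβ0.le _) hx, ← rpow_mul hβ0.le]
  have hexp : 1 / (2 * β + 1) * β ≤ 1 := by
    rw [div_mul_eq_mul_div, one_mul, div_le_one (by positivity)]; linarith
  calc β ^ (1 / (2 * β + 1) * β) * x ^ β ≤ 1 * β * x ^ β := by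
        rw [one_mul]; gcongr; exact rpow_le_self_of_one_le hβ hexp
    _ ≤ n * β * x ^ β := by gcongr

lemma Ffun_rpow_le_of_lt {n : ℕ} {β L x : ℝ} (hn : 1 ≤ (n : ℝ)) (hβ : 1 ≤ β) (hL : 0 < L)
    (hxL : L < x) : Ffun n β L x ^ β ≤ n * β * (L ^ (β - 1) * x) := by
  have hβ0 : 0 < β := by linarith
  have hLx : L ^ (β - 1) * x = L ^ β * (x / L) := by
    rw [rpow_sub_one hL.ne']; field_simp
  set y := x / L
  have hy : 1 ≤ y := by rw [le_div_iff₀ hL]; linarith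
  have hnβy : 1 ≤ n * β * y := by nlinarith [mul_le_mul hn hβ zero_le_one (by linarith)]
  have hexp : 2 * β / (2 * β + 1) ≤ 1 := by rw [div_le_one (by positivity)]; linarith
  rw [Ffun_of_lt hβ0 hL hxL, mul_rpow hL.le (by positivity), ← rpow_mul (by positivity), hLx]
  calc L ^ β * (n * β ^ 2 * y ^ 2) ^ (1 / (2 * β + 1) * β)
      ≤ L ^ β * ((n * β * y) ^ (2 : ℝ)) ^ (1 / (2 * β + 1) * β) := by
        gcongr; rw [rpow_two]; nlinarith [sq_nonneg (β * y)]
    _ = L ^ β * (n * β * y) ^ (2 * β / (2 * β + 1)) := by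
        rw [← rpow_mul (by positivity)]; ring_nf
    _ ≤ L ^ β * (n * β * y) := by gcongr; exact rpow_le_self_of_one_le hnβy hexp
    _ = n * β * (L ^ β * y) := by ring

theorem stmt7 (n : ℕ) (hn : 4 ≤ n) (β L : ℝ) (hβ : 1 < β) (hL : 0 < L)
    (x : ℝ) (hx : 0 ≤ x) :
    (n:ℝ) * β * phi β L x ≥ (Ffun n β L x) ^ β := by
  have hn1 : (1 : ℝ) ≤ n := by exact_mod_cast (by omega : 1 ≤ n)
  rcases le_or_gt x L with hxL | hxL
  · rw [phi_of_le hxL]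
    exact Ffun_rpow_le_of_le hn1 hβ.le hx hxL
  · calc Ffun n β L x ^ β ≤ n * β * (L ^ (β - 1) * x) := Ffun_rpow_le_of_lt hn1 hβ.le hL hxL
      _ ≤ n * β * phi β L x := by
        gcongr; exact rpow_sub_one_mul_le_phi hβ.le hL hxL
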